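/- For every r ≥ 4 there exists a constant C(r) > 0 such that the following holds. If n is sufficiently large and p > 0 satisfies p·n^{1/λ(r)}·log n ≤ 1/(2e), then for every edge e of K_n and every integer m with λ(r) + 1 ≤ m ≤ C(r,2)·log n, the expected number of sets F of m edges of G_{n,p} such that both endpoints of e lie in the vertex set of F and m ≥ λ(r)·(v(F) − 2) + 1 is at most ((m + C(r))/(2·C(r,2)·log n))^{m − λ(r)}. Here v(F) denotes the number of vertices incident to an edge of F or equal to an endpoint of e. -/

import Mathlib

open Finset

/-- The edge set of the copy of `H` under the injection `f`. -/
def copyEdges {W V : Type*} (H : SimpleGraph W) (f : W ↪ V) : Set (Sym2 V) :=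
  Sym2.map f '' H.edgeSet

/-- One step of the `H`-bootstrap process: infect every edge `e` for which some copy of `H`
contains `e` and has all its other edges already infected. -/
def bootStep {W V : Type*} (H : SimpleGraph W) (E : Set (Sym2 V)) : Set (Sym2 V) :=
  E ∪ {e | ∃ f : W ↪ V, e ∈ copyEdges H f ∧ copyEdges H f ⊆ insert e E}

/-- The closure of `E` under the `H`-bootstrap process. -/
def bootClosure {W V : Type*} (H : SimpleGraph W) (E : Set (Sym2 V)) : Set (Sym2 V) :=
  ⋃ t, (bootStep H)^[t] E

/-- `E` percolates in the `H`-bootstrap process on the complete graph on `V`. -/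
def Percolates {W V : Type*} (H : SimpleGraph W) (E : Set (Sym2 V)) : Prop :=
  bootClosure H E = (⊤ : SimpleGraph V).edgeSet

/-- The expectation of `X` under the Erdős–Rényi random graph `G_{n,p}`,
written as a sum over all graphs on `[n]`, weighted by their probabilities. -/
noncomputable def gnpExp (n : ℕ) (p : ℝ) (X : Finset (Sym2 (Fin n)) → ℝ) : ℝ :=
  ∑ E ∈ (⊤ : SimpleGraph (Fin n)).edgeFinset.powerset,
    p ^ E.card * (1 - p) ^ ((⊤ : SimpleGraph (Fin n)).edgeFinset.card - E.card) * X E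

/- probability of event `A` under `G_{n,p}` -/
open Classical in
noncomputable def gnpProb (n : ℕ) (p : ℝ) (A : Finset (Sym2 (Fin n)) → Prop) : ℝ :=
  gnpExp n p (fun E => if A E then 1 else 0)

/-- The critical probability for `H`-bootstrap percolation on `K_n`. -/
noncomputable def pc {W : Type*} (n : ℕ) (H : SimpleGraph W) : ℝ :=
  sInf {p : ℝ | p ∈ Set.Icc (0 : ℝ) 1 ∧
    1 / 2 ≤ gnpProb n p (fun E => Percolates H (↑E : Set (Sym2 (Fin n))))}

/-- `λ(r) = (C(r,2) - 2)/(r - 2)`. -/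
noncomputable def lam (r : ℕ) : ℝ := ((r.choose 2 : ℝ) - 2) / ((r : ℝ) - 2)

/-!
A first-moment count. The expectation is the sum of `p ^ m` over all admissible `m`-edge sets
`F`. Group them by the number `k` of vertices of `F` outside `e`: the density condition reads
`λ k + 1 ≤ m`, and there are at most `C(n, k) · C(C(k + 3, 2), m)` such `F`. Since
`C(n, k) ≤ n ^ k ≤ n ^ ((m - 1) / λ)` and `p ≤ 1 / (2 e n ^ (1/λ) log n)`, together with
`C(N, m) ≤ (e N / m) ^ m` each group contributes at most
`n ^ (-1/λ) (C(k + 3, 2) / (2 m log n)) ^ m ≤ n ^ (-1/λ) B ^ m` with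
`B = (m + 15 λ) / (2 C(r, 2) log n)` (so `C = 15 λ`), using `λ (k + 3) ≤ m + 3 λ`,
`(m + 3 λ)² ≤ m (m + 15 λ)` and `C(r, 2) ≤ 2 λ²`. There are fewer than `m ≤ C(r, 2) log n ≤ n ^ (1/λ)` groups, and `B ≤ 1`,
so the total is at most `B ^ m ≤ B ^ (m - λ)`.
-/

open Finset Real Filter

theorem Finset.sum_Icc_pow_mul_one_sub_pow {β : Type*} [DecidableEq β] (p : ℝ) {F M : Finset β}
    (hFM : F ⊆ M) : ∑ E ∈ Icc F M, p ^ #E * (1 - p) ^ (#M - #E) = p ^ #F := by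
  rw [Icc_eq_image_powerset hFM, sum_image (fun D hD D' hD' h => ?_)]
  · calc ∑ D ∈ (M \ F).powerset, p ^ #(F ∪ D) * (1 - p) ^ (#M - #(F ∪ D))
        = ∑ D ∈ (M \ F).powerset, p ^ #F * (p ^ #D * (1 - p) ^ (#(M \ F) - #D)) := by
          refine sum_congr rfl fun D hD => ?_
          have hDF : Disjoint F D := disjoint_of_subset_right (mem_powerset.1 hD) disjoint_sdiff
          rw [card_union_of_disjoint hDF, card_sdiff_of_subset hFM, pow_add, Nat.sub_add_eq]
          ring
      _ = p ^ #F := by rw [← mul_sum, sum_pow_mul_eq_add_pow]; simp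
  · have hD : Disjoint F D := disjoint_of_subset_right (mem_powerset.1 hD) disjoint_sdiff
    have hD' : Disjoint F D' := disjoint_of_subset_right (mem_powerset.1 hD') disjoint_sdiff
    rw [← union_sdiff_cancel_left hD, h, union_sdiff_cancel_left hD']

theorem gnpExp_ncard_subsets {n : ℕ} (p : ℝ) (P : Finset (Sym2 (Fin n)) → Prop)
    [DecidablePred P] :
    gnpExp n p (fun E => ({F | F ⊆ E ∧ P F}.ncard : ℝ)) =
      ∑ F ∈ (⊤ : SimpleGraph (Fin n)).edgeFinset.powerset with P F, p ^ #F := by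
  set M := (⊤ : SimpleGraph (Fin n)).edgeFinset
  have hncard (E : Finset (Sym2 (Fin n))) :
      {F | F ⊆ E ∧ P F}.ncard = #{F ∈ E.powerset | P F} := by
    rw [← Set.ncard_coe_finset]; congr; ext; simp
  calc gnpExp n p (fun E => ({F | F ⊆ E ∧ P F}.ncard : ℝ))
      = ∑ E ∈ M.powerset, ∑ F ∈ E.powerset with P F, p ^ #E * (1 - p) ^ (#M - #E) := by
        simp only [gnpExp, hncard, sum_const, nsmul_eq_mul, mul_comm, M]
    _ = ∑ F ∈ M.powerset with P F, ∑ E ∈ Icc F M, p ^ #E * (1 - p) ^ (#M - #E) := by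
        refine sum_comm' fun E F => ?_
        simp only [mem_filter, mem_powerset, mem_Icc]
        exact ⟨fun ⟨hM, hE, hP⟩ => ⟨⟨hE, hM⟩, hE.trans hM, hP⟩,
          fun ⟨⟨hE, hM⟩, _, hP⟩ => ⟨hM, hE, hP⟩⟩
    _ = ∑ F ∈ M.powerset with P F, p ^ #F :=
        sum_congr rfl fun F hF =>
          sum_Icc_pow_mul_one_sub_pow p (mem_powerset.1 (mem_filter.1 hF).1)

theorem Finset.sum_pow_card_le_card_mul {β : Type*} {s t : Finset (Finset β)} {p : ℝ} {m : ℕ}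
    (hp : 0 ≤ p) (hst : ∀ F ∈ s, F ∈ t ∧ #F = m) : ∑ F ∈ s, p ^ #F ≤ #t * p ^ m :=
  calc ∑ F ∈ s, p ^ #F = #s * p ^ m := by
        rw [sum_congr rfl fun F hF => by rw [(hst F hF).2], sum_const, nsmul_eq_mul]
    _ ≤ #t * p ^ m := by gcongr; exact fun F hF => (hst F hF).1

section VerticesWith

variable {α : Type*} [Fintype α] [DecidableEq α]

/-- With `R` the endpoints of `e`, this is the vertex set whose size is the paper's `v(F)`. -/
def verticesWith (R : Finset α) (F : Finset (Sym2 α)) : Finset α :=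
  {u | (∃ f ∈ F, u ∈ f) ∨ u ∈ R}

theorem subset_verticesWith (R : Finset α) (F : Finset (Sym2 α)) : R ⊆ verticesWith R F :=
  fun u hu => by simp [verticesWith, hu]

theorem coe_verticesWith_toFinset (e : Sym2 α) (F : Finset (Sym2 α)) :
    (verticesWith e.toFinset F : Set α) = {u | (∃ f ∈ F, u ∈ f) ∨ u ∈ e} := by
  ext; simp [verticesWith, Sym2.mem_toFinset]

theorem card_filter_card_verticesWith_sdiff_le (R : Finset α) (m : ℕ) (P : ℕ → Prop)
    [DecidablePred P] :
    #{F : Finset (Sym2 α) | #F = m ∧ P #(verticesWith R F \ R)} ≤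
      ∑ k ∈ range (Fintype.card α + 1) with P k,
        (Fintype.card α).choose k * ((k + #R + 1).choose 2).choose m := by
  calc _ ≤ #(({k ∈ range (Fintype.card α + 1) | P k}).biUnion fun k =>
          (univ.powersetCard k).biUnion fun W => (W ∪ R).sym2.powersetCard m) := by
        refine card_le_card fun F hF => ?_
        obtain ⟨hFm, hP⟩ := (mem_filter.1 hF).2
        simp only [mem_biUnion, mem_filter, mem_range, mem_powersetCard]
        refine ⟨_, ⟨Nat.lt_succ_of_le (card_le_univ _), hP⟩, _, ⟨subset_univ _, rfl⟩, ?_,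
          hFm⟩
        rw [sdiff_union_of_subset (subset_verticesWith R F)]
        exact fun f hf => mem_sym2_iff.2 fun u hu => by
          simp only [verticesWith, mem_filter, mem_univ, true_and]
          exact Or.inl ⟨f, hf, hu⟩
    _ ≤ ∑ k ∈ range (Fintype.card α + 1) with P k, ∑ W ∈ univ.powersetCard k,
          #((W ∪ R).sym2.powersetCard m) :=
        card_biUnion_le.trans (sum_le_sum fun _ _ => card_biUnion_le)
    _ ≤ _ := by
        refine sum_le_sum fun k _ => ?_
        calc _ ≤ ∑ W ∈ (univ : Finset α).powersetCard k,
                  ((k + #R + 1).choose 2).choose m := by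
              refine sum_le_sum fun W hW => ?_
              -- `Finset.sym2` contains the diagonal, whence the `+ 1`.
              rw [card_powersetCard, card_sym2]
              refine Nat.choose_le_choose _ (Nat.choose_le_choose _ ?_)
              have := card_union_le W R
              rw [(mem_powersetCard.1 hW).2] at this
              omega
          _ = _ := by rw [sum_const, card_powersetCard, card_univ, smul_eq_mul]

end VerticesWith

theorem Nat.choose_le_exp_mul_div_pow (N m : ℕ) :
    (N.choose m : ℝ) ≤ (exp 1 * N / m) ^ m := by
  rcases m.eq_zero_or_pos with rfl | hm
  · simp
  have hm' : (0 : ℝ) < m := by exact_mod_cast hm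
  calc (N.choose m : ℝ) ≤ (N : ℝ) ^ m / m.factorial := Nat.choose_le_pow_div m N
    _ = (N : ℝ) ^ m * ((m : ℝ) ^ m / m.factorial) / (m : ℝ) ^ m := by field_simp
    _ ≤ (N : ℝ) ^ m * exp m / (m : ℝ) ^ m := by
        gcongr; exact pow_div_factorial_le_exp _ hm'.le m
    _ = (exp 1 * N / m) ^ m := by rw [← exp_one_pow]; ring

theorem choose_mul_choose_mul_pow_le {n k m N : ℕ} {lam p L : ℝ} (hn : 1 ≤ n) (hlam : 0 < lam)
    (hL : 0 < L) (hp : 0 ≤ p) (hpL : p * (n : ℝ) ^ (1 / lam) * L ≤ 1 / (2 * exp 1))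
    (hk : lam * k + 1 ≤ m) :
    (n.choose k * N.choose m : ℝ) * p ^ m ≤
      ((n : ℝ) ^ (1 / lam))⁻¹ * (N / (2 * m * L)) ^ m := by
  set s := (n : ℝ) ^ (1 / lam)
  have hn' : (1 : ℝ) ≤ n := by exact_mod_cast hn
  have hs : 1 ≤ s := one_le_rpow hn' (by positivity)
  have hm : (0 : ℝ) < m := by nlinarith [(Nat.cast_nonneg k : (0 : ℝ) ≤ k)]
  have hnk : (n.choose k : ℝ) ≤ s ^ ((m : ℝ) - 1) :=
    calc (n.choose k : ℝ) ≤ (n : ℝ) ^ k := by exact_mod_cast Nat.choose_le_pow n k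
      _ = s ^ (lam * k) := by
          rw [← rpow_mul (by positivity), ← mul_assoc, one_div_mul_cancel hlam.ne', one_mul,
            rpow_natCast]
      _ ≤ s ^ ((m : ℝ) - 1) := rpow_le_rpow_of_exponent_le hs (by linarith)
  have hp' : p ≤ 1 / (2 * exp 1 * s * L) := by
    rw [le_div_iff₀ (by positivity)]
    calc p * (2 * exp 1 * s * L) = 2 * exp 1 * (p * s * L) := by ring
      _ ≤ 2 * exp 1 * (1 / (2 * exp 1)) := by gcongr
      _ = 1 := by field_simp
  calc (n.choose k * N.choose m : ℝ) * p ^ m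
      ≤ s ^ ((m : ℝ) - 1) * (exp 1 * N / m) ^ m * (1 / (2 * exp 1 * s * L)) ^ m := by
        gcongr
        exact Nat.choose_le_exp_mul_div_pow N m
    _ = s⁻¹ * (s * (exp 1 * N / m) * (1 / (2 * exp 1 * s * L))) ^ m := by
        rw [rpow_sub_one (by positivity), rpow_natCast]
        ring
    _ = s⁻¹ * (N / (2 * m * L)) ^ m := by
        congr 2
        field_simp

theorem choose_add_three_two_div_le {k m : ℕ} {lam : ℝ} (hlam : 0 < lam) (hk : lam * k ≤ m)
    (hm : lam ≤ m) : ((k + 3).choose 2 : ℝ) / m ≤ (m + 15 * lam) / (2 * lam ^ 2) := by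
  have hm' : (0 : ℝ) < m := hlam.trans_le hm
  rw [div_le_div_iff₀ hm' (by positivity), Nat.cast_choose_two]
  push_cast
  have hk3 : lam * (k + 3) ≤ m + 3 * lam := by linarith
  have hk0 : (0 : ℝ) ≤ k := Nat.cast_nonneg k
  nlinarith [mul_le_mul hk3 hk3 (by positivity) (by positivity),
    mul_le_mul_of_nonneg_left hm hlam.le]

theorem half_le_lam {r : ℕ} (hr : 4 ≤ r) : (r : ℝ) / 2 ≤ lam r := by
  have hr' : (4 : ℝ) ≤ r := by exact_mod_cast hr
  rw [lam, le_div_iff₀ (by linarith), Nat.cast_choose_two]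
  nlinarith

theorem choose_two_le_two_mul_lam_sq {r : ℕ} (hr : 4 ≤ r) :
    (r.choose 2 : ℝ) ≤ 2 * lam r ^ 2 := by
  have hr' : (4 : ℝ) ≤ r := by exact_mod_cast hr
  have h := half_le_lam hr
  rw [Nat.cast_choose_two]
  nlinarith [mul_le_mul h h (by positivity) (by linarith)]

theorem eventually_le_mul_log_le_rpow (b : ℝ) {a c : ℝ} (ha : 0 < a) (hc : 0 < c) :
    ∀ᶠ n : ℕ in atTop, b ≤ a * log n ∧ a * log n ≤ (n : ℝ) ^ c := by
  have hb : ∀ᶠ x : ℝ in atTop, b ≤ a * log x :=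
    (tendsto_log_atTop.const_mul_atTop ha).eventually_ge_atTop b
  have hc : ∀ᶠ x : ℝ in atTop, a * log x ≤ x ^ c := by
    filter_upwards [((isLittleO_log_rpow_atTop hc).const_mul_left a).bound one_pos,
      eventually_ge_atTop 0] with x hx hx0
    rw [one_mul, norm_of_nonneg (rpow_nonneg hx0 c)] at hx
    exact (le_abs_self _).trans hx
  exact tendsto_natCast_atTop_atTop.eventually (hb.and hc)

theorem sum_choose_mul_choose_mul_pow_le {r n m : ℕ} {p L : ℝ} (hr : 4 ≤ r) (hn : 1 ≤ n)
    (hL : 0 < L) (hp : 0 ≤ p) (hpL : p * (n : ℝ) ^ (1 / lam r) * L ≤ 1 / (2 * exp 1))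
    (hm : lam r ≤ m) :
    ∑ k ∈ range (n + 1) with lam r * (k : ℕ) + 1 ≤ m,
        (n.choose k * ((k + 3).choose 2).choose m : ℝ) * p ^ m ≤
      m * (((n : ℝ) ^ (1 / lam r))⁻¹ * ((m + 15 * lam r) / (2 * r.choose 2 * L)) ^ m) := by
  have hr' : (4 : ℝ) ≤ r := by exact_mod_cast hr
  have hlam : 2 ≤ lam r := by linarith [half_le_lam hr]
  have hq : (0 : ℝ) < r.choose 2 := by exact_mod_cast Nat.choose_pos (by omega)
  calc _ ≤ ∑ k ∈ range (n + 1) with lam r * (k : ℕ) + 1 ≤ m,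
        ((n : ℝ) ^ (1 / lam r))⁻¹ * ((m + 15 * lam r) / (2 * r.choose 2 * L)) ^ m := by
        refine sum_le_sum fun k hk => (choose_mul_choose_mul_pow_le hn (by linarith) hL hp hpL
          (mem_filter.1 hk).2).trans ?_
        have hk : lam r * k ≤ m := by linarith [(mem_filter.1 hk).2]
        refine mul_le_mul_of_nonneg_left (pow_le_pow_left₀ (by positivity) ?_ m) (by positivity)
        calc ((k + 3).choose 2 : ℝ) / (2 * m * L) = ((k + 3).choose 2 : ℝ) / m / (2 * L) := by
              rw [div_div]; ring_nf
          _ ≤ (m + 15 * lam r) / (2 * lam r ^ 2) / (2 * L) :=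
              div_le_div_of_nonneg_right (choose_add_three_two_div_le (by linarith) hk hm)
                (by positivity)
          _ ≤ (m + 15 * lam r) / (2 * r.choose 2 * L) := by
              rw [div_div]
              exact div_le_div_of_nonneg_left (by positivity) (by positivity)
                (by nlinarith [choose_two_le_two_mul_lam_sq hr])
    _ ≤ m * (((n : ℝ) ^ (1 / lam r))⁻¹ * ((m + 15 * lam r) / (2 * r.choose 2 * L)) ^ m) := by
        rw [sum_const, nsmul_eq_mul]
        gcongr
        refine (card_le_card fun k hk => mem_range.2 ?_).trans_eq (card_range m)
        have hk := (mem_filter.1 hk).2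
        exact_mod_cast (show (k : ℝ) < m by nlinarith [(Nat.cast_nonneg k : (0 : ℝ) ≤ k)])

/-- **Lemma 15.** For every `r ≥ 4` there is `C(r) > 0` such that: if `n` is large,
`p > 0` satisfies `p n^{1/λ(r)} log n ≤ 1/(2e)`, `e` is an edge of `K_n` and
`λ(r) + 1 ≤ m ≤ C(r,2) log n`, then the expected number of `m`-edge subgraphs `F` of
`G_{n,p}` whose vertex set contains both endpoints of `e` and with
`m ≥ λ(r)(v(F) - 2) + 1` is at most `((m + C)/(2 C(r,2) log n))^{m - λ(r)}`. Here `v(F)` is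
the number of vertices incident to an edge of `F` or equal to an endpoint of `e`. -/
theorem expected_witness_sets_bound (r : ℕ) (hr : 4 ≤ r) :
    ∃ C : ℝ, 0 < C ∧ ∃ N : ℕ, ∀ n : ℕ, N ≤ n → ∀ p : ℝ, 0 < p →
      p * (n : ℝ) ^ (1 / lam r) * Real.log n ≤ 1 / (2 * Real.exp 1) →
      ∀ e ∈ (⊤ : SimpleGraph (Fin n)).edgeSet, ∀ m : ℕ,
        lam r + 1 ≤ (m : ℝ) → (m : ℝ) ≤ (r.choose 2 : ℝ) * Real.log n →
        gnpExp n p (fun E =>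
          ({F : Finset (Sym2 (Fin n)) | F ⊆ E ∧ F.card = m ∧
              (∀ v ∈ e, v ∈ {u : Fin n | ∃ f ∈ F, u ∈ f}) ∧
              lam r * (({u : Fin n | (∃ f ∈ F, u ∈ f) ∨ u ∈ e}.ncard : ℝ) - 2) + 1 ≤ (m : ℝ)
            }.ncard : ℝ))
          ≤ (((m : ℝ) + C) / (2 * (r.choose 2 : ℝ) * Real.log n)) ^ ((m : ℝ) - lam r) := by
  classical
  have hr' : (4 : ℝ) ≤ r := by exact_mod_cast hr
  have hlam : 0 < lam r := by linarith [half_le_lam hr]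
  have hq : (0 : ℝ) < r.choose 2 := by exact_mod_cast Nat.choose_pos (by omega)
  obtain ⟨N, hN⟩ := eventually_atTop.1
    (eventually_le_mul_log_le_rpow (15 * lam r) hq (one_div_pos.2 hlam))
  refine ⟨15 * lam r, by positivity, N, fun n hn p hp hpL e he m hm1 hm2 => ?_⟩
  obtain ⟨hlog, hlog_le⟩ := hN n hn
  set R := e.toFinset
  have hR : #R = 2 :=
    Sym2.card_toFinset_of_not_isDiag e (SimpleGraph.not_isDiag_of_mem_edgeSet _ he)
  have hL : 0 < log n := pos_of_mul_pos_right (by linarith) hq.le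
  have hn1 : 1 ≤ n := Nat.one_le_iff_ne_zero.2 (by rintro rfl; simp at hL)
  set B := ((m : ℝ) + 15 * lam r) / (2 * r.choose 2 * log n)
  have hB : 0 < B := by positivity
  have hB1 : B ≤ 1 := div_le_one_of_le₀ (by linarith) (by positivity)
  calc _ = _ := gnpExp_ncard_subsets p _
    _ ≤ #{F : Finset (Sym2 (Fin n)) | #F = m ∧ lam r * #(verticesWith R F \ R) + 1 ≤ m} *
          p ^ m := by
        refine sum_pow_card_le_card_mul hp.le fun F hF => ?_
        obtain ⟨-, hFm, -, hv⟩ := mem_filter.1 hF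
        rw [← coe_verticesWith_toFinset, Set.ncard_coe_finset,
          ← card_sdiff_add_card_eq_card (subset_verticesWith R F), hR] at hv
        push_cast at hv
        exact ⟨mem_filter.2 ⟨mem_univ _, hFm, by linarith⟩, hFm⟩
    _ ≤ (∑ k ∈ range (n + 1) with lam r * (k : ℕ) + 1 ≤ m,
          n.choose k * ((k + 3).choose 2).choose m : ℕ) * p ^ m := by
        gcongr
        simpa [hR] using card_filter_card_verticesWith_sdiff_le R m (fun k => lam r * k + 1 ≤ m)
    _ ≤ m * (((n : ℝ) ^ (1 / lam r))⁻¹ * B ^ m) := by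
        push_cast
        rw [sum_mul]
        exact sum_choose_mul_choose_mul_pow_le hr hn1 hL hp.le hpL (by linarith)
    _ = m / (n : ℝ) ^ (1 / lam r) * B ^ (m : ℝ) := by rw [rpow_natCast]; ring
    _ ≤ 1 * B ^ ((m : ℝ) - lam r) :=
        mul_le_mul (div_le_one_of_le₀ (by linarith) (by positivity))
          (rpow_le_rpow_of_exponent_ge hB hB1 (by linarith)) (by positivity) zero_le_one
    _ = _ := one_mul _
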